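/- For every monomial m = x_{i₁}⋯x_{i_k} with i₁,…,i_k ∈ [−n,n]*, one has m = X_{i₁}∘⋯∘X_{i_k}(1) + ∂₁(Ψ_{i₁,…,i_k}), where Ψ_{i₁,…,i_k} = Σ_{l=1}^{k} x_{i₁}⋯x_{i_{l−1}} Y_{i_l}[X_{i_{l+1}}∘⋯∘X_{i_k}(1)]. -/

import Mathlib

open scoped BigOperators

noncomputable section

namespace ToricBorderBasis

abbrev Exp (n : ℕ) := Fin n → ℤ

abbrev LaurentS (n : ℕ) (k : Type*) [Field k] : Type _ := AddMonoidAlgebra k (Exp n)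

variable {k : Type*} [Field k] {n : ℕ}

def edeg {n : ℕ} (α : Exp n) : ℕ := ∑ i, (α i).natAbs

def mono (k : Type*) [Field k] {n : ℕ} (α : Exp n) : LaurentS n k :=
  AddMonoidAlgebra.single α 1

def pdeg (p : LaurentS n k) : ℕ := (p.coeff : Exp n →₀ k).support.sup edeg

def expOf (n : ℕ) (i : Fin n) (s : Bool) : Exp n :=
  Pi.single i (if s then 1 else -1)

def varX (k : Type*) [Field k] {n : ℕ} (i : Fin n) (s : Bool) : LaurentS n k :=
  mono k (expOf n i s)

def Bx {n : ℕ} (B : Set (Exp n)) : Set (Exp n) :=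
  B ∪ {β | ∃ i s, ∃ α ∈ B, β = expOf n i s + α}

def bord {n : ℕ} (B : Set (Exp n)) : Set (Exp n) := Bx B \ B

def ConnectedToOne {n : ℕ} (B : Set (Exp n)) : Prop :=
  (0 : Exp n) ∈ B ∧ ∀ α ∈ B, α ≠ 0 →
    ∃ i s, ∃ α' ∈ B, α = expOf n i s + α' ∧ edeg α' < edeg α

def spanMon (k : Type*) [Field k] {n : ℕ} (A : Set (Exp n)) :
    Submodule k (LaurentS n k) :=
  Submodule.span k {p | ∃ α ∈ A, p = mono k α}

def Xop (π : LaurentS n k →ₗ[k] LaurentS n k) (i : Fin n) (s : Bool) :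
    LaurentS n k →ₗ[k] LaurentS n k :=
  π ∘ₗ LinearMap.mulLeft k (varX k i s)

/-- `π` is a projection from `⟨B^×⟩` onto `⟨B⟩`. -/
def IsProj (π : LaurentS n k →ₗ[k] LaurentS n k) (B : Set (Exp n)) : Prop :=
  (∀ p ∈ spanMon k (Bx B), π p ∈ spanMon k B) ∧ (∀ p ∈ spanMon k B, π p = p)

/-- The operators `X_i`, `i ∈ [−n,n]*`, pairwise commute on `⟨B⟩`. -/
def CommRelAll (π : LaurentS n k →ₗ[k] LaurentS n k) (B : Set (Exp n)) : Prop :=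
  ∀ (i : Fin n) (s : Bool) (j : Fin n) (t : Bool), ∀ b ∈ spanMon k B,
    Xop π i s (Xop π j t b) = Xop π j t (Xop π i s b)

/-- `X_i ∘ X_{−i} = Id` on `⟨B⟩` for every `i ∈ [−n,n]*`. -/
def InvRelAll (π : LaurentS n k →ₗ[k] LaurentS n k) (B : Set (Exp n)) : Prop :=
  ∀ (i : Fin n) (s : Bool), ∀ b ∈ spanMon k B, Xop π i s (Xop π i (!s) b) = b

/-- The rewriting family `F = {x^β − π(x^β) : x^β ∈ ∂B}`. -/
def rewFamAll (π : LaurentS n k →ₗ[k] LaurentS n k) (B : Set (Exp n)) :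
    Set (LaurentS n k) :=
  {f | ∃ β ∈ bord B, f = mono k β - π (mono k β)}

/-- Indices of the basis `Y_i[m]` of the free module `S₁`:
pairs of a signed index `(i,s)` and `m ∈ B` with `x_i m ∉ B`. -/
def GoodIdx (n : ℕ) (B : Set (Exp n)) : Type :=
  {q : (Fin n × Bool) × Exp n // q.2 ∈ B ∧ expOf n q.1.1 q.1.2 + q.2 ∉ B}

/-- The free `S`-module `S₁` with basis the `Y_i[m]`, `m ∈ B`, `x_i m ∉ B`. -/
abbrev S1 (n : ℕ) (k : Type*) [Field k] (B : Set (Exp n)) : Type _ :=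
  GoodIdx n B →₀ LaurentS n k

open Classical in
/-- The basis element `Y_i[m]`, with the convention `Y_i[m] = 0` if `x_i m ∈ B`. -/
def Ysym (k : Type*) [Field k] {n : ℕ} (B : Set (Exp n)) (i : Fin n) (s : Bool)
    (m : Exp n) : S1 n k B :=
  if h : m ∈ B ∧ expOf n i s + m ∉ B then Finsupp.single ⟨((i, s), m), h⟩ 1 else 0

/-- `k`-linear extension `b ↦ Y_i[b]` for `b ∈ ⟨B⟩`. -/
def YsymL (k : Type*) [Field k] {n : ℕ} (B : Set (Exp n)) (i : Fin n) (s : Bool)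
    (b : LaurentS n k) : S1 n k B :=
  (b.coeff : Exp n →₀ k).sum fun m c => c • Ysym k B i s m

/-- `ψ_i(m) = x_i m − π(x_i m)` for a monomial `m`. -/
def psiMono (π : LaurentS n k →ₗ[k] LaurentS n k) (i : Fin n) (s : Bool)
    (m : Exp n) : LaurentS n k :=
  mono k (expOf n i s + m) - π (mono k (expOf n i s + m))

/-- The `S`-module map `∂₁ : S₁ → S`, `Y_i[m] ↦ ψ_i(m)`. -/
def partial1 (π : LaurentS n k →ₗ[k] LaurentS n k) (B : Set (Exp n)) :
    S1 n k B →ₗ[LaurentS n k] LaurentS n k :=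
  Finsupp.lsum (LaurentS n k) fun q =>
    LinearMap.toSpanSingleton (LaurentS n k) (LaurentS n k)
      (psiMono π q.1.1.1 q.1.1.2 q.1.2)

/-- `φ_{i,j}(m) = x_i Y_j[m] − x_j Y_i[m] − Y_j[X_i(m)] + Y_i[X_j(m)]`. -/
def phiEl (π : LaurentS n k →ₗ[k] LaurentS n k) (B : Set (Exp n))
    (i : Fin n) (s : Bool) (j : Fin n) (t : Bool) (m : Exp n) : S1 n k B :=
  varX k i s • Ysym k B j t m - varX k j t • Ysym k B i s m
    - YsymL k B j t (Xop π i s (mono k m)) + YsymL k B i s (Xop π j t (mono k m))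

/-- `ρ_i(m) = x_i Y_{−i}[m] + Y_i[X_{−i}(m)]`. -/
def rhoEl (π : LaurentS n k →ₗ[k] LaurentS n k) (B : Set (Exp n))
    (i : Fin n) (s : Bool) (m : Exp n) : S1 n k B :=
  varX k i s • Ysym k B i (!s) m + YsymL k B i s (Xop π i (!s) (mono k m))

/-- The `S`-submodule `K₁ ⊆ S₁` generated by the `ρ_i(m)` and `φ_{i,j}(m)`, `m ∈ B`. -/
def K1 (π : LaurentS n k →ₗ[k] LaurentS n k) (B : Set (Exp n)) :
    Submodule (LaurentS n k) (S1 n k B) :=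
  Submodule.span (LaurentS n k)
    ({u | ∃ i s m, m ∈ B ∧ u = rhoEl π B i s m} ∪
     {u | ∃ i s j t m, ((i, s) : Fin n × Bool) ≠ (j, t) ∧ m ∈ B ∧ u = phiEl π B i s j t m})

/-- `X_{i₁} ∘ ⋯ ∘ X_{i_k}` for a sequence of signed indices. -/
def Xcomp (π : LaurentS n k →ₗ[k] LaurentS n k) :
    List (Fin n × Bool) → LaurentS n k →ₗ[k] LaurentS n k
  | [] => LinearMap.id
  | q :: L => (Xop π q.1 q.2) ∘ₗ Xcomp π L

/-- `Ψ_{i₁,…,i_k} = Σ_{l=1}^{k} x_{i₁}⋯x_{i_{l−1}} Y_{i_l}[X_{i_{l+1}} ∘ ⋯ ∘ X_{i_k}(1)]`. -/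
def Psi (π : LaurentS n k →ₗ[k] LaurentS n k) (B : Set (Exp n)) :
    List (Fin n × Bool) → S1 n k B
  | [] => 0
  | q :: L => YsymL k B q.1 q.2 (Xcomp π L 1) + varX k q.1 q.2 • Psi π B L

/-- Degree on `S₁`: max over the nonzero terms `m₁ Y_i[m₂]` of `δ(m₁)`
(`⊥` for the zero element). -/
def s1deg {B : Set (Exp n)} (u : S1 n k B) : WithBot ℕ :=
  u.support.sup fun q => (pdeg (u q) : WithBot ℕ)

end ToricBorderBasis

/-
The identity is a telescoping sum of the one-step relation `x_i b = X_i(b) + ∂₁(Y_i[b])` for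
`b ∈ ⟨B⟩`, which holds because `∂₁(Y_i[m]) = x_i m − π(x_i m)` for every `m ∈ B` (both sides
vanish when `x_i m ∈ B`, since `π` fixes `⟨B⟩`). Induction on the word `x_{i₁}⋯x_{i_k}`
applies it to `b = X_{i₂}∘⋯∘X_{i_k}(1)`, which lies in `⟨B⟩` because `1 ∈ B` and `π` maps
`⟨B^×⟩` into `⟨B⟩`.
-/

namespace ToricBorderBasis

section

variable {k : Type*} [Field k] {n : ℕ} {B : Set (Exp n)} {π : LaurentS n k →ₗ[k] LaurentS n k}

lemma mono_mem_spanMon {α : Exp n} (hα : α ∈ B) : mono k α ∈ spanMon k B :=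
  Submodule.subset_span ⟨α, hα, rfl⟩

lemma varX_mul_single (i : Fin n) (s : Bool) (m : Exp n) (c : k) :
    varX k i s * AddMonoidAlgebra.single m c = AddMonoidAlgebra.single (expOf n i s + m) c := by
  rw [varX, mono, AddMonoidAlgebra.single_mul_single, one_mul]

lemma varX_mul_mem_spanMon_Bx (i : Fin n) (s : Bool) {b : LaurentS n k}
    (hb : b ∈ spanMon k B) : varX k i s * b ∈ spanMon k (Bx B) := by
  induction hb using Submodule.span_induction with
  | mem p hp =>
      obtain ⟨α, hα, rfl⟩ := hp
      rw [mono, varX_mul_single]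
      exact Submodule.subset_span ⟨_, Or.inr ⟨i, s, α, hα, rfl⟩, rfl⟩
  | zero => simp
  | add x y _ _ hx hy => rw [mul_add]; exact add_mem hx hy
  | smul c x _ hx => rw [mul_smul_comm]; exact Submodule.smul_mem _ _ hx

lemma Xcomp_one_mem_spanMon (h0 : (0 : Exp n) ∈ B)
    (hπ : ∀ p ∈ spanMon k (Bx B), π p ∈ spanMon k B) :
    ∀ L : List (Fin n × Bool), Xcomp π L 1 ∈ spanMon k B
  | [] => mono_mem_spanMon (k := k) h0
  | q :: L => hπ _ (varX_mul_mem_spanMon_Bx q.1 q.2 (Xcomp_one_mem_spanMon h0 hπ L))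

lemma YsymL_eq_linearCombination (i : Fin n) (s : Bool) (b : LaurentS n k) :
    YsymL k B i s b
      = Finsupp.linearCombination k (Ysym k B i s) (AddMonoidAlgebra.coeffLinearEquiv k b) :=
  (Finsupp.linearCombination_apply _ _).symm

lemma YsymL_add (i : Fin n) (s : Bool) (b c : LaurentS n k) :
    YsymL k B i s (b + c) = YsymL k B i s b + YsymL k B i s c := by
  simp only [YsymL_eq_linearCombination, map_add]

lemma YsymL_smul (i : Fin n) (s : Bool) (c : k) (b : LaurentS n k) :
    YsymL k B i s (c • b) = c • YsymL k B i s b := by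
  simp only [YsymL_eq_linearCombination, map_smul]

lemma YsymL_single (i : Fin n) (s : Bool) (m : Exp n) (c : k) :
    YsymL k B i s (AddMonoidAlgebra.single m c) = c • Ysym k B i s m := by
  rw [YsymL, AddMonoidAlgebra.coeff_single]
  exact Finsupp.sum_single_index (zero_smul _ _)

lemma partial1_single (q : GoodIdx n B) (c : LaurentS n k) :
    partial1 π B (Finsupp.single q c) = c * psiMono π q.1.1.1 q.1.1.2 q.1.2 := by
  simp [partial1]

lemma partial1_Ysym (hπ : ∀ p ∈ spanMon k B, π p = p) (i : Fin n) (s : Bool) {m : Exp n}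
    (hm : m ∈ B) : partial1 π B (Ysym k B i s m) = psiMono π i s m := by
  rw [Ysym]
  split_ifs with h
  · exact (partial1_single (⟨_, h⟩ : GoodIdx n B) 1).trans (one_mul _)
  · have hmem : expOf n i s + m ∈ B := by tauto
    rw [map_zero, psiMono, hπ _ (mono_mem_spanMon hmem), sub_self]

lemma partial1_YsymL (hπ : ∀ p ∈ spanMon k B, π p = p) (i : Fin n) (s : Bool)
    {b : LaurentS n k} (hb : b ∈ spanMon k B) :
    partial1 π B (YsymL k B i s b) = varX k i s * b - π (varX k i s * b) := by
  induction hb using Submodule.span_induction with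
  | mem p hp =>
      obtain ⟨α, hα, rfl⟩ := hp
      rw [mono, YsymL_single, one_smul, partial1_Ysym hπ i s hα, varX_mul_single, psiMono, mono]
  | zero => simp [YsymL]
  | add x y _ _ hx hy => rw [YsymL_add, map_add, hx, hy, mul_add, map_add]; abel
  | smul c x _ hx =>
      rw [YsymL_smul, LinearMap.map_smul_of_tower, hx, mul_smul_comm, map_smul, smul_sub]

lemma varX_mul_eq_Xop_add_partial1 (hπ : ∀ p ∈ spanMon k B, π p = p) (i : Fin n) (s : Bool)
    {b : LaurentS n k} (hb : b ∈ spanMon k B) :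
    varX k i s * b = Xop π i s b + partial1 π B (YsymL k B i s b) := by
  rw [partial1_YsymL hπ i s hb, Xop, LinearMap.comp_apply, LinearMap.mulLeft_apply,
    add_sub_cancel]

end

theorem statement_10_general {n : ℕ} {k : Type*} [Field k]
    (B : Set (Exp n)) (hB1 : ConnectedToOne B)
    (π : LaurentS n k →ₗ[k] LaurentS n k) (hπ : IsProj π B) :
    ∀ L : List (Fin n × Bool),
      (L.map fun q => varX k q.1 q.2).prod
        = Xcomp π L 1 + partial1 π B (Psi π B L) := by
  intro L
  induction L with
  | nil => simp [Xcomp, Psi]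
  | cons q L ih =>
      have hstep := varX_mul_eq_Xop_add_partial1 hπ.2 q.1 q.2
        (Xcomp_one_mem_spanMon hB1.1 hπ.1 L)
      rw [List.map_cons, List.prod_cons, ih, mul_add, hstep, Xcomp, Psi, LinearMap.comp_apply,
        map_add, map_smul, smul_eq_mul]
      abel

/-- For every monomial `m = x_{i₁}⋯x_{i_k}` one has
`m = X_{i₁} ∘ ⋯ ∘ X_{i_k}(1) + ∂₁(Ψ_{i₁,…,i_k})`. -/
theorem statement_10 {n : ℕ} {k : Type*} [Field k]
    (B : Set (Exp n)) (hBfin : B.Finite) (hB1 : ConnectedToOne B)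
    (π : LaurentS n k →ₗ[k] LaurentS n k) (hπ : IsProj π B)
    (hcomm : CommRelAll π B) (hinv : InvRelAll π B) :
    ∀ L : List (Fin n × Bool),
      (L.map fun q => varX k q.1 q.2).prod
        = Xcomp π L 1 + partial1 π B (Psi π B L) :=
  statement_10_general B hB1 π hπ

end ToricBorderBasis
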